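/- arXiv:1404.0964 — 3 statements merged into one kernel-verified Lean document; each statement's English description precedes it below -/
import Mathlib

section
/- Conditional decomposition of the L-out-of-(N+1) Bayes risk: the team Bayes risk of N+1 agents under the L-out-of-(N+1) fusion rule can be written as R = R0 * (p0*(1-a1) + p1*b1) + R1 * (p0*a1 + p1*(1-b1)), where R0 is the Bayes risk of the remaining N agents under the L-out-of-N rule with updated prior q0 = p0*(1-a1)/(p0*(1-a1)+p1*b1), and R1 is the Bayes risk of the remaining N agents under the (L-1)-out-of-N rule with updated prior q1 = p0*a1/(p0*a1+p1*(1-b1)). -/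
open Finset

/-- Number of 1-votes in a vector of binary votes. -/
def cntVotes {N : ℕ} (v : Fin N → Bool) : ℕ :=
  (Finset.univ.filter (fun n => v n = true)).card

/-- Conditional decomposition of the L-out-of-(N+1) Bayes risk.
Agent 1 has error probabilities `a1, b1`; given `(H, Hhat_1) = (h, h1)` the
remaining `N` agents vote `1` independently with probabilities `α n h h1`, so
the probability of the vote vector `v` is `Pv h h1 v`.  The team decides 1 iff
the total number of 1-votes (including agent 1's) is at least `L`.  Then the
team Bayes risk equals
`R0 * (p0*(1-a1) + p1*b1) + R1 * (p0*a1 + p1*(1-b1))`, where `R0` (resp. `R1`)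
is the Bayes risk of the remaining `N` agents under the `L`-out-of-`N`
(resp. `(L-1)`-out-of-`N`) rule with updated prior `q0` (resp. `q1`). -/
theorem bayes_risk_conditional_decomposition
    (N L : ℕ) (hL1 : 1 ≤ L) (hLN : L ≤ N + 1)
    (c10 c01 p0 p1 a1 b1 q0 q1 : ℝ)
    (hp0 : p0 ∈ Set.Ioo (0 : ℝ) 1) (hp1 : p1 = 1 - p0)
    (ha1 : a1 ∈ Set.Ioo (0 : ℝ) 1) (hb1 : b1 ∈ Set.Ioo (0 : ℝ) 1)
    (α : Fin N → Bool → Bool → ℝ) (hα : ∀ n h h1, α n h h1 ∈ Set.Icc (0 : ℝ) 1)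
    (hq0 : q0 = p0 * (1 - a1) / (p0 * (1 - a1) + p1 * b1))
    (hq1 : q1 = p0 * a1 / (p0 * a1 + p1 * (1 - b1))) :
    let Pv : Bool → Bool → (Fin N → Bool) → ℝ := fun h h1 v =>
      ∏ n, (if v n then α n h h1 else 1 - α n h h1)
    -- team false-alarm probability (conditioning on agent 1's vote)
    let PFA : ℝ :=
      (1 - a1) * (∑ v ∈ Finset.univ.filter (fun v => L ≤ cntVotes v), Pv false false v)
        + a1 * (∑ v ∈ Finset.univ.filter (fun v => L - 1 ≤ cntVotes v), Pv false true v)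
    -- team missed-detection probability
    let PMD : ℝ :=
      b1 * (∑ v ∈ Finset.univ.filter (fun v => cntVotes v < L), Pv true false v)
        + (1 - b1) * (∑ v ∈ Finset.univ.filter (fun v => cntVotes v < L - 1), Pv true true v)
    -- Bayes risk of the last N agents, L-out-of-N rule, prior q0
    let R0 : ℝ :=
      c10 * q0 * (∑ v ∈ Finset.univ.filter (fun v => L ≤ cntVotes v), Pv false false v)
        + c01 * (1 - q0) * (∑ v ∈ Finset.univ.filter (fun v => cntVotes v < L), Pv true false v)
    -- Bayes risk of the last N agents, (L-1)-out-of-N rule, prior q1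
    let R1 : ℝ :=
      c10 * q1 * (∑ v ∈ Finset.univ.filter (fun v => L - 1 ≤ cntVotes v), Pv false true v)
        + c01 * (1 - q1) * (∑ v ∈ Finset.univ.filter (fun v => cntVotes v < L - 1), Pv true true v)
    c10 * p0 * PFA + c01 * p1 * PMD =
      R0 * (p0 * (1 - a1) + p1 * b1) + R1 * (p0 * a1 + p1 * (1 - b1)) := by
  intro Pv PFA PMD R0 R1
  obtain ⟨hp0l, hp0u⟩ := hp0
  obtain ⟨ha1l, ha1u⟩ := ha1
  obtain ⟨hb1l, hb1u⟩ := hb1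
  have hD0 : p0 * (1 - a1) + p1 * b1 > 0 := by
    have : p1 > 0 := by rw [hp1]; linarith
    have := mul_pos hp0l (by linarith : (0:ℝ) < 1 - a1)
    nlinarith
  have hD1 : p0 * a1 + p1 * (1 - b1) > 0 := by
    have : p1 > 0 := by rw [hp1]; linarith
    have := mul_pos hp0l ha1l
    nlinarith
  simp only [PFA, PMD, R0, R1, hq0, hq1]
  field_simp
  ring
end

section
/- Under the OR fusion rule with N agents, the minimum Bayes risk over public-voting strategies equals the minimum Bayes risk over secret-voting strategies, because any public-voting strategy's performance depends only on each agent's decision rule in the event that all previous decisions equal 0, which is also realizable by secret voting. -/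
/-- A public-voting strategy profile: agent `n` maps her private signal and the
vector of all previous decisions to a binary decision. -/
def PubStrat (N : ℕ) : Type :=
  ∀ n : Fin N, ℝ → (Fin n → Bool) → Bool

/-- The first `k` decisions generated sequentially by a public-voting strategy
profile `p` on the private-signal realization `y`. -/
def pubDecs {N : ℕ} (p : PubStrat N) (y : Fin N → ℝ) :
    (k : ℕ) → k ≤ N → (Fin k → Bool)
  | 0, _ => fun i => i.elim0
  | k + 1, h =>
      Fin.snoc (pubDecs p y k (Nat.le_of_succ_le h))
        (p ⟨k, h⟩ (y ⟨k, h⟩) (pubDecs p y k (Nat.le_of_succ_le h)))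

/-- OR fusion of binary votes. -/
def orFuse {N : ℕ} (v : Fin N → Bool) : Bool :=
  decide (∃ n, v n = true)

/-- Bayes risk of a team decision map `d`, where `μ0, μ1` are the conditional
distributions of the private-signal vector given `H = 0, 1`. -/
noncomputable def bayesRisk {N : ℕ} (μ0 μ1 : MeasureTheory.Measure (Fin N → ℝ))
    (c10 c01 p0 p1 : ℝ) (d : (Fin N → ℝ) → Bool) : ℝ :=
  c10 * p0 * (μ0 {y | d y = true}).toReal + c01 * p1 * (μ1 {y | d y = false}).toReal

lemma key_allfalse {N : ℕ} (p : PubStrat N) (y : Fin N → ℝ) :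
    ∀ (k : ℕ) (h : k ≤ N),
      ((∀ i : Fin k, pubDecs p y k h i = false) ↔
       (∀ i : Fin k, p ⟨i, lt_of_lt_of_le i.2 h⟩ (y ⟨i, lt_of_lt_of_le i.2 h⟩)
          (fun _ => false) = false)) := by
  intro k
  induction k with
  | zero => intro h; constructor <;> intro _ i <;> exact i.elim0
  | succ k ih =>
    intro h
    have hk : k ≤ N := Nat.le_of_succ_le h
    constructor
    · intro hA
      have hA' : ∀ i : Fin k, pubDecs p y k hk i = false := by
        intro i
        have := hA i.castSucc
        simpa [pubDecs, Fin.snoc_castSucc] using this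
      have hfun : pubDecs p y k hk = fun _ => false := funext hA'
      have hlast : p ⟨k, h⟩ (y ⟨k, h⟩) (fun _ => false) = false := by
        have := hA (Fin.last k)
        simpa [pubDecs, Fin.snoc_last, hfun] using this
      intro i
      rcases Nat.lt_or_ge i.val k with hi | hi
      · exact (ih hk).1 hA' ⟨i.val, hi⟩
      · have : i.val = k := le_antisymm (Nat.lt_succ_iff.mp i.2) hi
        have : i = Fin.last k := Fin.ext this
        subst this
        exact hlast
    · intro hB
      have hB' : ∀ i : Fin k, p ⟨i, lt_of_lt_of_le i.2 hk⟩ (y ⟨i, lt_of_lt_of_le i.2 hk⟩)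
          (fun _ => false) = false := by
        intro i
        exact hB i.castSucc
      have hA' : ∀ i : Fin k, pubDecs p y k hk i = false := (ih hk).2 hB'
      have hfun : pubDecs p y k hk = fun _ => false := funext hA'
      have hstep : pubDecs p y (k + 1) h = Fin.snoc (pubDecs p y k hk)
          (p ⟨k, h⟩ (y ⟨k, h⟩) (pubDecs p y k hk)) := rfl
      intro i
      rw [hstep]
      induction i using Fin.lastCases with
      | last =>
        rw [Fin.snoc_last, hfun]
        exact hB (Fin.last k)
      | cast j =>
        rw [Fin.snoc_castSucc]
        exact hA' j

lemma orFuse_pub_eq_secret {N : ℕ} (p : PubStrat N) (y : Fin N → ℝ) :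
    orFuse (pubDecs p y N le_rfl) =
      orFuse (fun n => p n (y n) (fun _ => false)) := by
  have hkey := key_allfalse p y N le_rfl
  by_cases hA : ∀ i : Fin N, pubDecs p y N le_rfl i = false
  · have hB := hkey.1 hA
    have h1 : orFuse (pubDecs p y N le_rfl) = false := by
      simp only [orFuse, decide_eq_false_iff_not]
      rintro ⟨n, hn⟩
      exact absurd (hA n) (by simp [hn])
    have h2 : orFuse (fun n => p n (y n) (fun _ => false)) = false := by
      simp only [orFuse, decide_eq_false_iff_not]
      rintro ⟨n, hn⟩
      have := hB n
      simp only [Fin.eta] at this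
      exact absurd this (by simp [hn])
    rw [h1, h2]
  · have hB : ¬ ∀ i : Fin N, p ⟨i, lt_of_lt_of_le i.2 le_rfl⟩ (y ⟨i, lt_of_lt_of_le i.2 le_rfl⟩)
        (fun _ => false) = false := fun h => hA (hkey.2 h)
    have h1 : orFuse (pubDecs p y N le_rfl) = true := by
      simp only [orFuse, decide_eq_true_eq]
      push_neg at hA
      obtain ⟨n, hn⟩ := hA
      exact ⟨n, by simpa using hn⟩
    have h2 : orFuse (fun n => p n (y n) (fun _ => false)) = true := by
      simp only [orFuse, decide_eq_true_eq]
      push_neg at hB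
      obtain ⟨n, hn⟩ := hB
      refine ⟨n, ?_⟩
      simp only [Fin.eta] at hn
      simpa using hn
    rw [h1, h2]

instance instNonemptyPubStrat (N : ℕ) : Nonempty (PubStrat N) :=
  ⟨fun _ _ _ => false⟩

lemma bayesRisk_nonneg {N : ℕ} (μ0 μ1 : MeasureTheory.Measure (Fin N → ℝ))
    (c10 c01 p0 p1 : ℝ) (hc10 : 0 < c10) (hc01 : 0 < c01)
    (hp0 : 0 < p0) (hp1 : 0 < p1) (d : (Fin N → ℝ) → Bool) :
    0 ≤ bayesRisk μ0 μ1 c10 c01 p0 p1 d := by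
  unfold bayesRisk
  have := ENNReal.toReal_nonneg (a := μ0 {y | d y = true})
  have := ENNReal.toReal_nonneg (a := μ1 {y | d y = false})
  positivity

/-- Under the OR fusion rule, the infimum of the Bayes risk over public-voting
strategies equals the infimum over secret-voting strategies. -/
theorem or_rule_public_eq_secret
    (N : ℕ) (μ0 μ1 : MeasureTheory.Measure (Fin N → ℝ))
    [MeasureTheory.IsProbabilityMeasure μ0] [MeasureTheory.IsProbabilityMeasure μ1]
    (c10 c01 p0 p1 : ℝ) (hc10 : 0 < c10) (hc01 : 0 < c01)
    (hp0 : p0 ∈ Set.Ioo (0 : ℝ) 1) (hp1 : p1 = 1 - p0) :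
    (⨅ s : Fin N → ℝ → Bool,
        bayesRisk μ0 μ1 c10 c01 p0 p1 (fun y => orFuse (fun n => s n (y n)))) =
    (⨅ p : PubStrat N,
        bayesRisk μ0 μ1 c10 c01 p0 p1 (fun y => orFuse (pubDecs p y N le_rfl))) := by
  have hp1' : 0 < p1 := by rw [hp1]; linarith [hp0.2]
  have hnonneg := bayesRisk_nonneg μ0 μ1 c10 c01 p0 p1 hc10 hc01 hp0.1 hp1'
  have hbdd1 : BddBelow (Set.range fun s : Fin N → ℝ → Bool =>
      bayesRisk μ0 μ1 c10 c01 p0 p1 (fun y => orFuse (fun n => s n (y n)))) := by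
    refine ⟨0, ?_⟩; rintro _ ⟨s, rfl⟩; exact hnonneg _
  have hbdd2 : BddBelow (Set.range fun p : PubStrat N =>
      bayesRisk μ0 μ1 c10 c01 p0 p1 (fun y => orFuse (pubDecs p y N le_rfl))) := by
    refine ⟨0, ?_⟩; rintro _ ⟨p, rfl⟩; exact hnonneg _
  apply le_antisymm
  · apply le_ciInf
    intro p
    have heq : (fun y => orFuse (pubDecs p y N le_rfl)) =
        fun y => orFuse (fun n => (fun n r => p n r (fun _ => false)) n (y n)) := by
      funext y; exact orFuse_pub_eq_secret p y
    rw [heq]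
    exact ciInf_le hbdd1 (fun n r => p n r (fun _ => false))
  · apply le_ciInf
    intro s
    have heq : ∀ y : Fin N → ℝ,
        orFuse (pubDecs (fun n r _ => s n r) y N le_rfl) =
        orFuse (fun n => s n (y n)) := by
      intro y
      have := orFuse_pub_eq_secret (fun n r _ => s n r) y
      simpa using this
    calc (⨅ p : PubStrat N,
        bayesRisk μ0 μ1 c10 c01 p0 p1 (fun y => orFuse (pubDecs p y N le_rfl)))
        ≤ bayesRisk μ0 μ1 c10 c01 p0 p1
            (fun y => orFuse (pubDecs (fun n r _ => s n r) y N le_rfl)) :=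
          ciInf_le hbdd2 _
      _ = bayesRisk μ0 μ1 c10 c01 p0 p1 (fun y => orFuse (fun n => s n (y n))) := by
          congr 1; funext y; exact heq y
end

section
/- Under the AND fusion rule with N agents, the infimum of the Bayes risk over public-voting strategies equals the infimum over secret-voting strategies: replacing each agent's decision function by its restriction to the all-ones history yields the same team decision distribution. -/
/-- AND fusion of binary votes. -/
def andFuse {N : ℕ} (v : Fin N → Bool) : Bool :=
  decide (∀ n, v n = true)

instance {N : ℕ} : Nonempty (PubStrat N) := ⟨fun _ _ _ => true⟩

lemma pubDecs_all_true {N : ℕ} (p : PubStrat N) (y : Fin N → ℝ) :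
    ∀ (k : ℕ) (h : k ≤ N), (∀ i, pubDecs p y k h i = true) ↔
      ∀ i : Fin k, p (Fin.castLE h i) (y (Fin.castLE h i)) (fun _ => true) = true
  | 0, h => by
      constructor <;> intro _ i <;> exact i.elim0
  | k + 1, h => by
      have IH := pubDecs_all_true p y k (Nat.le_of_succ_le h)
      constructor
      · intro H
        have hprev : ∀ i, pubDecs p y k (Nat.le_of_succ_le h) i = true := by
          intro i
          have := H i.castSucc
          simpa [pubDecs, Fin.snoc_castSucc] using this
        have hprev' : pubDecs p y k (Nat.le_of_succ_le h) = fun _ => true :=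
          funext hprev
        intro i
        refine Fin.lastCases ?_ ?_ i
        · have := H (Fin.last k)
          simp only [pubDecs, Fin.snoc_last] at this
          have hcast : Fin.castLE h (Fin.last k) = (⟨k, h⟩ : Fin N) := rfl
          rw [hcast]
          rwa [hprev'] at this
        · intro j
          have hcast : Fin.castLE h j.castSucc
              = Fin.castLE (Nat.le_of_succ_le h) j := rfl
          rw [hcast]
          exact (IH.mp hprev) j
      · intro H
        have hprev : ∀ i, pubDecs p y k (Nat.le_of_succ_le h) i = true := by
          apply IH.mpr
          intro j
          have hcast : Fin.castLE (Nat.le_of_succ_le h) j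
              = Fin.castLE h j.castSucc := rfl
          rw [hcast]
          exact H j.castSucc
        have hprev' : pubDecs p y k (Nat.le_of_succ_le h) = fun _ => true :=
          funext hprev
        intro i
        refine Fin.lastCases ?_ ?_ i
        · simp only [pubDecs, Fin.snoc_last]
          rw [hprev']
          exact H (Fin.last k)
        · intro j
          simpa [pubDecs, Fin.snoc_castSucc] using hprev j

lemma andFuse_pubDecs {N : ℕ} (p : PubStrat N) (y : Fin N → ℝ) :
    andFuse (pubDecs p y N le_rfl)
      = andFuse (fun n => p n (y n) (fun _ => true)) := by
  have h := pubDecs_all_true p y N le_rfl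
  simp only [andFuse]
  apply decide_eq_decide.mpr
  simpa using h

/-- Under the AND (N-out-of-N) fusion rule, the infimum of the Bayes risk over public-voting
strategies equals the infimum over secret-voting strategies. -/
theorem and_rule_public_eq_secret
    (N : ℕ) (μ0 μ1 : MeasureTheory.Measure (Fin N → ℝ))
    [MeasureTheory.IsProbabilityMeasure μ0] [MeasureTheory.IsProbabilityMeasure μ1]
    (c10 c01 p0 p1 : ℝ) (hc10 : 0 < c10) (hc01 : 0 < c01)
    (hp0 : p0 ∈ Set.Ioo (0 : ℝ) 1) (hp1 : p1 = 1 - p0) :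
    (⨅ s : Fin N → ℝ → Bool,
        bayesRisk μ0 μ1 c10 c01 p0 p1 (fun y => andFuse (fun n => s n (y n)))) =
    (⨅ p : PubStrat N,
        bayesRisk μ0 μ1 c10 c01 p0 p1 (fun y => andFuse (pubDecs p y N le_rfl))) := by
  have hp1' : 0 ≤ p1 := by
    rw [hp1]; linarith [hp0.2]
  have hnn : ∀ d : (Fin N → ℝ) → Bool, 0 ≤ bayesRisk μ0 μ1 c10 c01 p0 p1 d := by
    intro d
    have h1 : 0 ≤ c10 * p0 := mul_nonneg hc10.le hp0.1.le
    have h2 : 0 ≤ c01 * p1 := mul_nonneg hc01.le hp1'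
    exact add_nonneg (mul_nonneg h1 ENNReal.toReal_nonneg)
      (mul_nonneg h2 ENNReal.toReal_nonneg)
  have hbdd1 : BddBelow (Set.range fun s : Fin N → ℝ → Bool =>
      bayesRisk μ0 μ1 c10 c01 p0 p1 (fun y => andFuse (fun n => s n (y n)))) :=
    ⟨0, by rintro r ⟨s, rfl⟩; exact hnn _⟩
  have hbdd2 : BddBelow (Set.range fun p : PubStrat N =>
      bayesRisk μ0 μ1 c10 c01 p0 p1 (fun y => andFuse (pubDecs p y N le_rfl))) :=
    ⟨0, by rintro r ⟨p, rfl⟩; exact hnn _⟩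
  apply le_antisymm
  · apply le_ciInf
    intro p
    have h1 := ciInf_le hbdd1 (fun n x => p n x (fun _ => true))
    refine h1.trans_eq ?_
    have heq : ∀ y : Fin N → ℝ, andFuse (fun n => p n (y n) (fun _ => true))
        = andFuse (pubDecs p y N le_rfl) :=
      fun y => (andFuse_pubDecs p y).symm
    simp only [bayesRisk, heq]
  · apply le_ciInf
    intro s
    have h1 := ciInf_le hbdd2 (fun n x _ => s n x : PubStrat N)
    refine h1.trans_eq ?_
    have heq : ∀ y : Fin N → ℝ, andFuse (pubDecs (fun n x _ => s n x : PubStrat N) y N le_rfl)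
        = andFuse (fun n => s n (y n)) :=
      fun y => andFuse_pubDecs (fun n x _ => s n x) y
    simp only [bayesRisk, heq]
end
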